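/- Let m ≡ 3 (mod 4) be a positive integer, and let c = (m² + 5m + 4)/2, a₁ = (m² + 3m + 4)/2, b₁ = m + 2, a₂ = (m² + 3m − 4)/2, b₂ = m + 4. Suppose t₁, t₂ are integers satisfying −c = 2(a₁t₁ + a₂t₂). Consider the multiset of vectors in ℝ² consisting of: one copy of (c, 0); |t₁| copies each of sgn(t₁)·(a₁, b₁√m) and sgn(t₁)·(a₁, −b₁√m); and |t₂| copies each of sgn(t₂)·(a₂, b₂√m) and sgn(t₂)·(a₂, −b₂√m). Then all these 1 + 2|t₁| + 2|t₂| vectors have Euclidean norm c, they all lie in Λ(m) = {(a, b√m) : a, b ∈ ℤ}, and their sum is the zero vector. -/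

import Mathlib

noncomputable def Lambda (m : ℤ) : Set (EuclideanSpace ℝ (Fin 2)) :=
  {v | ∃ a b : ℤ, v 0 = (a : ℝ) ∧ v 1 = (b : ℝ) * Real.sqrt m}

noncomputable def vec (x y : ℝ) : EuclideanSpace ℝ (Fin 2) := WithLp.toLp 2 ![x, y]

lemma vec_apply0 (x y : ℝ) : vec x y 0 = x := rfl
lemma vec_apply1 (x y : ℝ) : vec x y 1 = y := rfl

lemma smul_vec (s x y : ℝ) : s • vec x y = vec (s*x) (s*y) := by
  ext i; fin_cases i <;> simp [vec]

lemma add_vec (x y x' y' : ℝ) : vec x y + vec x' y' = vec (x+x') (y+y') := by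
  ext i; fin_cases i <;> simp [vec]

lemma vec_zero : vec 0 0 = 0 := by
  ext i; fin_cases i <;> simp [vec]

lemma vec_eq_zero (x y : ℝ) (hx : x = 0) (hy : y = 0) : vec x y = 0 := by
  rw [hx, hy]; exact vec_zero

lemma norm_vec (x y : ℝ) : ‖vec x y‖ = Real.sqrt (x ^ 2 + y ^ 2) := by
  rw [EuclideanSpace.norm_eq]
  simp [vec, Fin.sum_univ_two, sq_abs, sq]

theorem stmt_12 (m c a1 b1 a2 b2 t1 t2 : ℤ) (hm : 0 < m) (hm4 : m % 4 = 3)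
    (hc : 2 * c = m ^ 2 + 5 * m + 4) (ha1 : 2 * a1 = m ^ 2 + 3 * m + 4)
    (hb1 : b1 = m + 2) (ha2 : 2 * a2 = m ^ 2 + 3 * m - 4) (hb2 : b2 = m + 4)
    (ht : -c = 2 * (a1 * t1 + a2 * t2)) :
    let w0 : EuclideanSpace ℝ (Fin 2) := vec (c : ℝ) 0
    let w1 : EuclideanSpace ℝ (Fin 2) :=
      (Int.sign t1 : ℝ) • vec (a1 : ℝ) ((b1 : ℝ) * Real.sqrt m)
    let w2 : EuclideanSpace ℝ (Fin 2) :=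
      (Int.sign t1 : ℝ) • vec (a1 : ℝ) (-((b1 : ℝ) * Real.sqrt m))
    let w3 : EuclideanSpace ℝ (Fin 2) :=
      (Int.sign t2 : ℝ) • vec (a2 : ℝ) ((b2 : ℝ) * Real.sqrt m)
    let w4 : EuclideanSpace ℝ (Fin 2) :=
      (Int.sign t2 : ℝ) • vec (a2 : ℝ) (-((b2 : ℝ) * Real.sqrt m))
    let M : Multiset (EuclideanSpace ℝ (Fin 2)) :=
      {w0} + Multiset.replicate t1.natAbs w1 + Multiset.replicate t1.natAbs w2 +
        Multiset.replicate t2.natAbs w3 + Multiset.replicate t2.natAbs w4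
    Multiset.card M = 1 + 2 * t1.natAbs + 2 * t2.natAbs ∧
      (∀ v ∈ M, ‖v‖ = (c : ℝ)) ∧ (∀ v ∈ M, v ∈ Lambda m) ∧ M.sum = 0 := by
  intro w0 w1 w2 w3 w4 M
  have hm' : (0:ℝ) ≤ (m:ℝ) := by exact_mod_cast hm.le
  have hsq : Real.sqrt m ^ 2 = (m:ℝ) := Real.sq_sqrt hm'
  have hcpos : (0:ℤ) < c := by nlinarith
  have hcR : (0:ℝ) ≤ (c:ℝ) := by exact_mod_cast hcpos.le
  -- key norm identities
  have k1 : a1^2 + b1^2*m = c^2 := by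
    have h4 : 4*(a1^2 + b1^2*m) = 4*c^2 := by
      linear_combination (2*a1 + (m^2+3*m+4)) * ha1 + (4*m*(b1 + (m+2))) * hb1
        - (2*c + (m^2+5*m+4)) * hc
    linarith
  have k2 : a2^2 + b2^2*m = c^2 := by
    have h4 : 4*(a2^2 + b2^2*m) = 4*c^2 := by
      linear_combination (2*a2 + (m^2+3*m-4)) * ha2 + (4*m*(b2 + (m+4))) * hb2
        - (2*c + (m^2+5*m+4)) * hc
    linarith
  have k1R : (a1:ℝ)^2 + ((b1:ℝ)*Real.sqrt m)^2 = (c:ℝ)^2 := by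
    rw [mul_pow, hsq]; exact_mod_cast k1
  have k2R : (a2:ℝ)^2 + ((b2:ℝ)*Real.sqrt m)^2 = (c:ℝ)^2 := by
    rw [mul_pow, hsq]; exact_mod_cast k2
  -- sign facts
  have sgn_sq : ∀ t : ℤ, t ≠ 0 → ((t.sign : ℤ):ℝ)^2 = 1 := by
    intro t ht0
    rcases lt_trichotomy t 0 with h | h | h
    · rw [Int.sign_eq_neg_one_of_neg h]; norm_num
    · exact absurd h ht0
    · rw [Int.sign_eq_one_of_pos h]; norm_num
  -- generic norm computation
  have norm_smul_vec : ∀ (t : ℤ) (x y : ℝ), t ≠ 0 → x^2 + y^2 = (c:ℝ)^2 →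
      ‖((t.sign : ℤ):ℝ) • vec x y‖ = (c:ℝ) := by
    intro t x y ht0 hxy
    rw [smul_vec, norm_vec]
    have h2 := sgn_sq t ht0
    have : (((t.sign : ℤ):ℝ)*x)^2 + (((t.sign : ℤ):ℝ)*y)^2 = (c:ℝ)^2 := by
      linear_combination hxy + (x^2+y^2) * h2
    rw [this, Real.sqrt_sq hcR]
  refine ⟨?_, ?_, ?_, ?_⟩
  · simp [M]; ring
  · intro v hv
    simp only [M, Multiset.mem_add, Multiset.mem_singleton, Multiset.mem_replicate] at hv
    have hy2 : ∀ y : ℝ, (-y)^2 = y^2 := fun y => by ring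
    rcases hv with ((((h|h)|h)|h)|h)
    · subst h
      rw [norm_vec]
      have : (c:ℝ)^2 + (0:ℝ)^2 = (c:ℝ)^2 := by ring
      rw [this, Real.sqrt_sq hcR]
    · obtain ⟨hn, rfl⟩ := h
      exact norm_smul_vec t1 _ _ (by simpa using hn) k1R
    · obtain ⟨hn, rfl⟩ := h
      exact norm_smul_vec t1 _ _ (by simpa using hn) (by rw [hy2]; exact k1R)
    · obtain ⟨hn, rfl⟩ := h
      exact norm_smul_vec t2 _ _ (by simpa using hn) k2R
    · obtain ⟨hn, rfl⟩ := h
      exact norm_smul_vec t2 _ _ (by simpa using hn) (by rw [hy2]; exact k2R)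
  · intro v hv
    simp only [M, Multiset.mem_add, Multiset.mem_singleton, Multiset.mem_replicate] at hv
    rcases hv with ((((h|h)|h)|h)|h)
    · subst h
      exact ⟨c, 0, by simp [w0, vec_apply0], by simp [w0, vec_apply1]⟩
    · obtain ⟨_, rfl⟩ := h
      refine ⟨t1.sign * a1, t1.sign * b1, ?_, ?_⟩ <;>
        simp only [w1, smul_vec, vec_apply0, vec_apply1] <;> push_cast <;> ring
    · obtain ⟨_, rfl⟩ := h
      refine ⟨t1.sign * a1, -(t1.sign * b1), ?_, ?_⟩ <;>
        simp only [w2, smul_vec, vec_apply0, vec_apply1] <;> push_cast <;> ring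
    · obtain ⟨_, rfl⟩ := h
      refine ⟨t2.sign * a2, t2.sign * b2, ?_, ?_⟩ <;>
        simp only [w3, smul_vec, vec_apply0, vec_apply1] <;> push_cast <;> ring
    · obtain ⟨_, rfl⟩ := h
      refine ⟨t2.sign * a2, -(t2.sign * b2), ?_, ?_⟩ <;>
        simp only [w4, smul_vec, vec_apply0, vec_apply1] <;> push_cast <;> ring
  · have hsum : M.sum = w0 + ((t1.natAbs : ℝ) • w1 + ((t1.natAbs : ℝ) • w2 +
        ((t2.natAbs : ℝ) • w3 + (t2.natAbs : ℝ) • w4))) := by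
      simp only [M, Multiset.sum_add, Multiset.sum_singleton, Multiset.sum_replicate,
        ← Nat.cast_smul_eq_nsmul ℝ]
      abel
    rw [hsum]
    have hs1 : ((t1.sign : ℤ):ℝ) * (t1.natAbs : ℝ) = (t1 : ℝ) := by
      rw [Nat.cast_natAbs]; exact_mod_cast Int.sign_mul_natAbs t1
    have hs2 : ((t2.sign : ℤ):ℝ) * (t2.natAbs : ℝ) = (t2 : ℝ) := by
      rw [Nat.cast_natAbs]; exact_mod_cast Int.sign_mul_natAbs t2
    have htR : -(c:ℝ) = 2 * ((a1:ℝ) * t1 + (a2:ℝ) * t2) := by exact_mod_cast ht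
    simp only [w0, w1, w2, w3, w4, smul_vec, add_vec]
    refine vec_eq_zero _ _ ?_ ?_
    · linear_combination 2*(a1:ℝ)*hs1 + 2*(a2:ℝ)*hs2 - htR
    · ring
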